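/- Let Q be a d-dimensional prismatoid with two parallel base facets Q+ and Q−, and let H be a hyperplane parallel to and strictly between the hyperplanes of Q+ and Q−. Then the cross-section Q ∩ H is normally equivalent to the Minkowski sum Q+ + Q−; in particular, the normal fan of Q ∩ H is the common refinement of the normal fans of Q+ and Q−. -/

import Mathlib

open Set Pointwise

/-- A (full-dimensional) polytope in `ℝ^d`: the convex hull of a finite point set,
whose affine span is the whole space (equivalently, a compact convex set with
nonempty interior that is a finite intersection of closed half-spaces). -/
def IsPolytope (d : ℕ) (P : Set (Fin d → ℝ)) : Prop :=
  (∃ V : Finset (Fin d → ℝ), P = convexHull ℝ (V : Set (Fin d → ℝ))) ∧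
    affineSpan ℝ P = ⊤

/-- The face of `P` consisting of the maximizers of the linear functional `c` on `P`. -/
def polyFace {d : ℕ} (P : Set (Fin d → ℝ)) (c : (Fin d → ℝ) →ₗ[ℝ] ℝ) :
    Set (Fin d → ℝ) :=
  {x ∈ P | ∀ y ∈ P, c y ≤ c x}

/-- `F` is an (exposed) face of `P`: the set of maximizers of some linear functional. -/
def IsFace {d : ℕ} (P F : Set (Fin d → ℝ)) : Prop :=
  ∃ c : (Fin d → ℝ) →ₗ[ℝ] ℝ, F = polyFace P c

/-- The (affine) dimension of a subset of `ℝ^d`. -/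
noncomputable def sDim {d : ℕ} (A : Set (Fin d → ℝ)) : ℕ :=
  Module.finrank ℝ (affineSpan ℝ A).direction

/-- A vertex of `P` is a point whose singleton is a face. -/
def IsVertex {d : ℕ} (P : Set (Fin d → ℝ)) (v : Fin d → ℝ) : Prop :=
  IsFace P {v}

/-- A facet of a `d`-polytope is a face of dimension `d - 1`. -/
def IsFacet (d : ℕ) (P F : Set (Fin d → ℝ)) : Prop :=
  IsFace P F ∧ sDim F = d - 1

/-- The number of facets of `P`. -/
noncomputable def nFacets (d : ℕ) (P : Set (Fin d → ℝ)) : ℕ :=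
  {F | IsFacet d P F}.ncard

/-- Two vertices are adjacent in the graph of `P` if the segment joining them
is a (1-dimensional) face, i.e. an edge, of `P`. -/
def Adj {d : ℕ} (P : Set (Fin d → ℝ)) (u v : Fin d → ℝ) : Prop :=
  u ≠ v ∧ IsFace P (segment ℝ u v)

/-- A walk of length `k` from `u` to `v` in the graph of `P`. -/
def IsWalk {d : ℕ} (P : Set (Fin d → ℝ)) (u v : Fin d → ℝ) (k : ℕ) : Prop :=
  ∃ f : ℕ → (Fin d → ℝ), f 0 = u ∧ f k = v ∧ ∀ i < k, Adj P (f i) (f (i + 1))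

/-- Graph distance in the graph of the polytope `P` (∞ if there is no walk). -/
noncomputable def gDist {d : ℕ} (P : Set (Fin d → ℝ)) (u v : Fin d → ℝ) : ℕ∞ :=
  sInf ((fun k : ℕ => (k : ℕ∞)) '' {k | IsWalk P u v k})

/-- The diameter of the graph of the polytope `P`. -/
noncomputable def gDiam (d : ℕ) (P : Set (Fin d → ℝ)) : ℕ∞ :=
  ⨆ u ∈ {x | IsVertex P x}, ⨆ v ∈ {x | IsVertex P x}, gDist P u v

/-- A spindle: a polytope `P` with two distinguished vertices `u`, `v` (the apices)
such that every facet of `P` contains at least one of them. -/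
def IsSpindle (d : ℕ) (P : Set (Fin d → ℝ)) (u v : Fin d → ℝ) : Prop :=
  IsPolytope d P ∧ IsVertex P u ∧ IsVertex P v ∧ u ≠ v ∧
    ∀ F, IsFacet d P F → u ∈ F ∨ v ∈ F

/-- Two polytopes are normally equivalent if they have the same normal fan, i.e.
they induce the same partition of linear functionals according to maximizing faces. -/
def NormallyEquiv {d : ℕ} (P Q : Set (Fin d → ℝ)) : Prop :=
  ∀ c₁ c₂ : (Fin d → ℝ) →ₗ[ℝ] ℝ,
    polyFace P c₁ = polyFace P c₂ ↔ polyFace Q c₁ = polyFace Q c₂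

-- nonemptiness of faces
lemma polyFace_nonempty {d : ℕ} {A : Set (Fin d → ℝ)} (hA : IsCompact A)
    (hne : A.Nonempty) (c : (Fin d → ℝ) →ₗ[ℝ] ℝ) : (polyFace A c).Nonempty := by
  obtain ⟨x, hx, hmax⟩ := hA.exists_isMaxOn hne
    (c.continuous_of_finiteDimensional.continuousOn)
  exact ⟨x, hx, fun y hy => hmax hy⟩

-- membership in the face of a positive Minkowski combination
lemma mem_polyFace_combo {d : ℕ} {A B S : Set (Fin d → ℝ)} {s t : ℝ}
    (hs : 0 < s) (ht : 0 < t) (hS : S = s • A + t • B)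
    (c : (Fin d → ℝ) →ₗ[ℝ] ℝ) (x : Fin d → ℝ) :
    x ∈ polyFace S c ↔
      ∃ a ∈ polyFace A c, ∃ m ∈ polyFace B c, x = s • a + t • m := by
  constructor
  · rintro ⟨hxS, hmax⟩
    rw [hS] at hxS
    obtain ⟨a', ⟨a, ha, rfl⟩, m', ⟨m, hm, rfl⟩, rfl⟩ := hxS
    refine ⟨a, ⟨ha, fun y hy => ?_⟩, m, ⟨hm, fun y hy => ?_⟩, rfl⟩
    · have hmem : s • y + t • m ∈ S := by
        rw [hS]; exact ⟨s • y, smul_mem_smul_set hy, t • m, smul_mem_smul_set hm, rfl⟩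
      have := hmax _ hmem
      simp only [map_add, map_smul, smul_eq_mul] at this
      nlinarith
    · have hmem : s • a + t • y ∈ S := by
        rw [hS]; exact ⟨s • a, smul_mem_smul_set ha, t • y, smul_mem_smul_set hy, rfl⟩
      have := hmax _ hmem
      simp only [map_add, map_smul, smul_eq_mul] at this
      nlinarith
  · rintro ⟨a, ⟨ha, hamax⟩, m, ⟨hm, hmmax⟩, rfl⟩
    constructor
    · rw [hS]; exact ⟨s • a, smul_mem_smul_set ha, t • m, smul_mem_smul_set hm, rfl⟩
    · intro y hy
      rw [hS] at hy
      obtain ⟨a', ⟨a₀, ha₀, rfl⟩, m', ⟨m₀, hm₀, rfl⟩, rfl⟩ := hy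
      simp only [map_add, map_smul, smul_eq_mul]
      have h1 := hamax a₀ ha₀
      have h2 := hmmax m₀ hm₀
      nlinarith

-- recovering the face of a summand from the face of the sum
lemma polyFace_recover {d : ℕ} {A B S : Set (Fin d → ℝ)} {s t : ℝ}
    (hs : 0 < s) (ht : 0 < t) (hS : S = s • A + t • B)
    (c : (Fin d → ℝ) →ₗ[ℝ] ℝ) (hB : (polyFace B c).Nonempty) :
    polyFace A c = {a ∈ A | ∃ m ∈ B, s • a + t • m ∈ polyFace S c} := by
  ext a
  constructor
  · intro ha
    obtain ⟨m, hm⟩ := hB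
    exact ⟨ha.1, m, hm.1, (mem_polyFace_combo hs ht hS c _).2 ⟨a, ha, m, hm, rfl⟩⟩
  · rintro ⟨haA, m, hmB, hface⟩
    refine ⟨haA, fun y hy => ?_⟩
    have hmem : s • y + t • m ∈ S := by
      rw [hS]; exact ⟨s • y, smul_mem_smul_set hy, t • m, smul_mem_smul_set hmB, rfl⟩
    have := hface.2 _ hmem
    simp only [map_add, map_smul, smul_eq_mul] at this
    nlinarith

-- the key normal-fan refinement equivalence for a positive Minkowski combination
lemma polyFace_combo_iff {d : ℕ} {A B S : Set (Fin d → ℝ)} {s t : ℝ}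
    (hs : 0 < s) (ht : 0 < t) (hS : S = s • A + t • B)
    (hAne : ∀ c, (polyFace A c).Nonempty) (hBne : ∀ c, (polyFace B c).Nonempty)
    (c₁ c₂ : (Fin d → ℝ) →ₗ[ℝ] ℝ) :
    polyFace S c₁ = polyFace S c₂ ↔
      polyFace A c₁ = polyFace A c₂ ∧ polyFace B c₁ = polyFace B c₂ := by
  have hS' : S = t • B + s • A := by rw [hS, add_comm]
  constructor
  · intro h
    constructor
    · rw [polyFace_recover hs ht hS c₁ (hBne c₁), polyFace_recover hs ht hS c₂ (hBne c₂), h]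
    · rw [polyFace_recover ht hs hS' c₁ (hAne c₁), polyFace_recover ht hs hS' c₂ (hAne c₂), h]
  · rintro ⟨h1, h2⟩
    ext x
    rw [mem_polyFace_combo hs ht hS c₁, mem_polyFace_combo hs ht hS c₂, h1, h2]

lemma extremePoint_isVertex {d : ℕ} (V : Finset (Fin d → ℝ)) {v : Fin d → ℝ}
    (hv : v ∈ (convexHull ℝ (V : Set (Fin d → ℝ))).extremePoints ℝ) :
    IsVertex (convexHull ℝ (V : Set (Fin d → ℝ))) v := by
  set A : Set (Fin d → ℝ) := convexHull ℝ (V : Set (Fin d → ℝ)) with hA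
  set W : Set (Fin d → ℝ) := (V : Set (Fin d → ℝ)) \ {v} with hW
  have hvV : v ∈ (V : Set (Fin d → ℝ)) := extremePoints_convexHull_subset hv
  have hWfin : W.Finite := V.finite_toSet.diff
  have hWcl : IsClosed (convexHull ℝ W) := (hWfin.isCompact_convexHull ℝ).isClosed
  have hnot : v ∉ convexHull ℝ W := by
    intro h
    have h2 : v ∈ (convexHull ℝ W).extremePoints ℝ :=
      inter_extremePoints_subset_extremePoints_of_subset
        (convexHull_mono diff_subset) ⟨h, hv⟩
    exact (extremePoints_convexHull_subset h2).2 rfl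
  obtain ⟨f, u, hfu, huv⟩ :=
    geometric_hahn_banach_closed_point (convex_convexHull ℝ W) hWcl hnot
  have hWlt : ∀ w ∈ convexHull ℝ W, f w < f v := fun w hw => lt_trans (hfu w hw) huv
  have hmax : ∀ y ∈ A, f y ≤ f v := by
    intro y hy
    refine convexHull_min ?_ (convex_halfSpace_le (f.toLinearMap.isLinear) (f v)) hy
    intro z hz
    by_cases h : z = v
    · simp [h]
    · exact le_of_lt (hWlt z (subset_convexHull ℝ W ⟨hz, h⟩))
  refine ⟨f.toLinearMap, ?_⟩
  apply Subset.antisymm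
  · intro x hx
    rw [mem_singleton_iff] at hx
    subst hx
    exact ⟨subset_convexHull ℝ _ hvV, fun y hy => hmax y hy⟩
  · intro x hx
    obtain ⟨hxA, hxmax⟩ := hx
    have hfx : f x = f v :=
      le_antisymm (hmax _ hxA) (hxmax v (subset_convexHull ℝ _ hvV))
    by_cases hWne : W.Nonempty
    · have hVeq : (V : Set (Fin d → ℝ)) = insert v W := by
        rw [hW, insert_diff_singleton, insert_eq_of_mem hvV]
      have hxA' : x ∈ convexJoin ℝ {v} (convexHull ℝ W) := by
        rw [hA, hVeq, convexHull_insert hWne] at hxA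
        exact hxA
      rw [mem_convexJoin] at hxA'
      obtain ⟨a, ha, w, hw, hseg⟩ := hxA'
      have hav : a = v := ha
      rw [hav] at hseg
      obtain ⟨p, q, hp, hq, hpq, hx⟩ := hseg
      have hfw : f w < f v := hWlt w hw
      have : f x = p * f v + q * f w := by
        rw [← hx]; simp [mul_comm]
      have hq0 : q = 0 := by
        by_contra h
        have hq' : 0 < q := lt_of_le_of_ne hq (Ne.symm h)
        have hp' : p = 1 - q := by linarith
        rw [hp'] at this
        nlinarith [mul_pos hq' (sub_pos.mpr hfw)]
      have hp1 : p = 1 := by linarith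
      rw [mem_singleton_iff]
      rw [← hx, hq0, hp1, one_smul, zero_smul, add_zero]
    · have hsub : (V : Set (Fin d → ℝ)) ⊆ {v} := by
        intro z hz
        by_contra h
        exact hWne ⟨z, hz, h⟩
      have h2 : A ⊆ {v} := by
        rw [hA, ← convexHull_singleton (𝕜 := ℝ) v]
        exact convexHull_mono hsub
      exact h2 hxA

/-- A cross-section of a prismatoid `Q` (a polytope all of whose vertices lie in
two parallel base facets `Q⁺`, `Q⁻`) by a parallel hyperplane strictly between the
bases is normally equivalent to the Minkowski sum `Q⁺ + Q⁻`; in particular, its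
normal fan is the common refinement of the normal fans of `Q⁺` and `Q⁻`. -/
theorem prismatoid_section_minkowski (d : ℕ) (Q : Set (Fin d → ℝ))
    (ℓ : (Fin d → ℝ) →ₗ[ℝ] ℝ) (bp bm b : ℝ)
    (hQ : IsPolytope d Q)
    (Qp Qm : Set (Fin d → ℝ))
    (hQp : IsFacet d Q Qp) (hQm : IsFacet d Q Qm)
    (hp : Qp = {x ∈ Q | ℓ x = bp}) (hm : Qm = {x ∈ Q | ℓ x = bm})
    (hprism : ∀ w, IsVertex Q w → w ∈ Qp ∪ Qm)
    (hbm : bm < b) (hbp : b < bp) :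
    NormallyEquiv (Q ∩ {x | ℓ x = b}) (Qp + Qm) ∧
      ∀ c₁ c₂ : (Fin d → ℝ) →ₗ[ℝ] ℝ,
        (polyFace (Q ∩ {x | ℓ x = b}) c₁ = polyFace (Q ∩ {x | ℓ x = b}) c₂ ↔
          (polyFace Qp c₁ = polyFace Qp c₂ ∧ polyFace Qm c₁ = polyFace Qm c₂)) := by
  obtain ⟨⟨V, hV⟩, hspan⟩ := hQ
  have hQcomp : IsCompact Q := hV ▸ V.finite_toSet.isCompact_convexHull ℝ
  have hQconv : Convex ℝ Q := hV ▸ convex_convexHull ℝ _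
  have hQne : Q.Nonempty := by
    rcases Q.eq_empty_or_nonempty with h | h
    · exfalso
      rw [h, AffineSubspace.span_empty] at hspan
      have h0 : (0 : Fin d → ℝ) ∈ (⊥ : AffineSubspace ℝ (Fin d → ℝ)) := by
        rw [hspan]; trivial
      rw [← AffineSubspace.mem_coe, AffineSubspace.bot_coe] at h0
      exact h0
    · exact h
  have hℓcont : Continuous ℓ := ℓ.continuous_of_finiteDimensional
  -- basic facts about the two bases
  have hQpQ : Qp ⊆ Q := by rw [hp]; exact sep_subset _ _
  have hQmQ : Qm ⊆ Q := by rw [hm]; exact sep_subset _ _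
  have hQpval : ∀ x ∈ Qp, ℓ x = bp := by rw [hp]; exact fun x hx => hx.2
  have hQmval : ∀ x ∈ Qm, ℓ x = bm := by rw [hm]; exact fun x hx => hx.2
  have hQpconv : Convex ℝ Qp := by
    rw [hp]; exact hQconv.inter (convex_hyperplane ℓ.isLinear bp)
  have hQmconv : Convex ℝ Qm := by
    rw [hm]; exact hQconv.inter (convex_hyperplane ℓ.isLinear bm)
  have hQpcomp : IsCompact Qp := by
    rw [hp]; exact hQcomp.inter_right (isClosed_eq hℓcont continuous_const)
  have hQmcomp : IsCompact Qm := by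
    rw [hm]; exact hQcomp.inter_right (isClosed_eq hℓcont continuous_const)
  have hQpne : Qp.Nonempty := by
    obtain ⟨c₀, hc₀⟩ := hQp.1
    rw [hc₀]; exact polyFace_nonempty hQcomp hQne c₀
  have hQmne : Qm.Nonempty := by
    obtain ⟨c₀, hc₀⟩ := hQm.1
    rw [hc₀]; exact polyFace_nonempty hQcomp hQne c₀
  -- Q is the convex hull of its two bases
  have hQ_eq : Q = convexHull ℝ (Qp ∪ Qm) := by
    have hEsubV : Q.extremePoints ℝ ⊆ (V : Set (Fin d → ℝ)) := by
      rw [hV]; exact extremePoints_convexHull_subset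
    have hEfin : (Q.extremePoints ℝ).Finite := V.finite_toSet.subset hEsubV
    have hQE : Q = convexHull ℝ (Q.extremePoints ℝ) := by
      conv_lhs => rw [← closure_convexHull_extremePoints hQcomp hQconv]
      exact (hEfin.isCompact_convexHull ℝ).isClosed.closure_eq
    have hEsub : Q.extremePoints ℝ ⊆ Qp ∪ Qm := by
      intro e he
      refine hprism e ?_
      rw [hV] at he ⊢
      exact extremePoint_isVertex V he
    refine Subset.antisymm ?_ (convexHull_min (union_subset hQpQ hQmQ) hQconv)
    calc Q = convexHull ℝ (Q.extremePoints ℝ) := hQE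
    _ ⊆ convexHull ℝ (Qp ∪ Qm) := convexHull_mono hEsub
  -- the cross-section is a positive Minkowski combination of the bases
  set s : ℝ := (b - bm) / (bp - bm) with hs_def
  set t : ℝ := (bp - b) / (bp - bm) with ht_def
  have hden : (0:ℝ) < bp - bm := by linarith
  have hs : 0 < s := div_pos (by linarith) hden
  have ht : 0 < t := div_pos (by linarith) hden
  have hst : s + t = 1 := by
    rw [hs_def, ht_def, ← add_div, div_eq_one_iff_eq hden.ne']
    ring
  have hsec : Q ∩ {x | ℓ x = b} = s • Qp + t • Qm := by
    ext x
    constructor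
    · rintro ⟨hxQ, hxb⟩
      have hxb' : ℓ x = b := hxb
      rw [hQ_eq, hQpconv.convexHull_union hQmconv hQpne hQmne, mem_convexJoin] at hxQ
      obtain ⟨a, ha, m, hm', ⟨p, q, hp0, hq0, hpq, hxeq⟩⟩ := hxQ
      have hℓx : p * bp + q * bm = b := by
        rw [← hxeq, map_add, map_smul, map_smul, smul_eq_mul, smul_eq_mul,
          hQpval a ha, hQmval m hm'] at hxb'
        exact hxb'
      have hps : p = s := by
        rw [hs_def, eq_div_iff hden.ne']
        linear_combination hℓx - bm * hpq
      have hqt : q = t := by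
        have : q = 1 - p := by linarith
        rw [this, hps]; linarith
      exact ⟨s • a, smul_mem_smul_set ha, t • m, smul_mem_smul_set hm',
        by rw [← hxeq, hps, hqt]⟩
    · rintro ⟨a', ⟨a, ha, rfl⟩, m', ⟨m, hm', rfl⟩, rfl⟩
      refine ⟨hQconv (hQpQ ha) (hQmQ hm') hs.le ht.le hst, ?_⟩
      show ℓ _ = b
      rw [map_add, map_smul, map_smul, smul_eq_mul, smul_eq_mul,
        hQpval a ha, hQmval m hm', hs_def, ht_def]
      field_simp
      ring
  have hQpfne : ∀ c, (polyFace Qp c).Nonempty :=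
    fun c => polyFace_nonempty hQpcomp hQpne c
  have hQmfne : ∀ c, (polyFace Qm c).Nonempty :=
    fun c => polyFace_nonempty hQmcomp hQmne c
  have h1 := fun c₁ c₂ => polyFace_combo_iff hs ht hsec hQpfne hQmfne c₁ c₂
  have hsum : Qp + Qm = (1:ℝ) • Qp + (1:ℝ) • Qm := by simp [one_smul]
  have h2 := fun c₁ c₂ => polyFace_combo_iff one_pos one_pos hsum hQpfne hQmfne c₁ c₂
  exact ⟨fun c₁ c₂ => (h1 c₁ c₂).trans (h2 c₁ c₂).symm, h1⟩
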